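/- For A ∈ B(X), a point λ ∈ σ(A) is a pole of the resolvent of A if and only if asc(A - λ) = dsc(A - λ) < ∞. -/

import Mathlib

/-!
Write `T = A - λ` and `R(μ) = (μ - A)⁻¹`.

Pole ⇒ stabilisation. If `(μ - λ)ⁿ R(μ)` is bounded near `λ`, then
`G(μ) = (μ - λ)ⁿ R(μ) - ∑_{i<n} (μ - λ)ⁱ T^{n-1-i}` is bounded and holomorphic on a punctured disc,
so it extends across `λ`, and `(μ - A) G(μ) = Tⁿ = G(μ) (μ - A)`. Whenever `(μ - A) g(μ) = y` near
`λ` with `g` holomorphic, evaluation at `λ` gives `y = T (-g λ)`, and the difference quotient of `g`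
at `λ` satisfies the same identity with `y` replaced by `-g λ`. Iterating, `Tⁿ = T^{n+1} c` and
symmetrically `Tⁿ = d T^{n+1}`: kernels and ranges of the powers of `T` stabilise at `n`. Once
both stabilise somewhere, the kernels stabilise wherever the ranges do and conversely, so
`asc T = dsc T`.

Stabilisation ⇒ pole. If kernels and ranges stabilise at `p`, `T` induces a bijective, hence
invertible, operator `U` on `X ⧸ ker Tᵖ`, and `Tᵖ = J π` for the quotient map `π` and some `J`. Then
`(μ - λ)ᵖ R(μ) = ∑_{i<p} (μ - λ)ⁱ T^{p-1-i} + J (μ - λ - U)⁻¹ π` near `λ`, and the right-hand side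
is continuous at `λ`.
-/

open Filter Metric Set Asymptotics Topology

namespace Paper

variable {X : Type*} [NormedAddCommGroup X] [NormedSpace ℂ X] [CompleteSpace X]

/-- The ascent of an operator: the least `n` with `ker Tⁿ = ker Tⁿ⁺¹`, `⊤` if none exists. -/
noncomputable def ascent (T : X →L[ℂ] X) : ℕ∞ :=
  sInf ((↑) '' {n : ℕ | LinearMap.ker ((T ^ n : X →L[ℂ] X) : X →ₗ[ℂ] X) = LinearMap.ker ((T ^ (n + 1) : X →L[ℂ] X) : X →ₗ[ℂ] X)})

/-- The descent of an operator: the least `n` with `range Tⁿ = range Tⁿ⁺¹`, `⊤` if none exists. -/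
noncomputable def descent (T : X →L[ℂ] X) : ℕ∞ :=
  sInf ((↑) '' {n : ℕ | LinearMap.range ((T ^ n : X →L[ℂ] X) : X →ₗ[ℂ] X) = LinearMap.range ((T ^ (n + 1) : X →L[ℂ] X) : X →ₗ[ℂ] X)})

/-- `T` has the single-valued extension property at `z₀`. -/
def HasSVEPAt (T : X →L[ℂ] X) (z₀ : ℂ) : Prop :=
  ∀ r > (0 : ℝ), ∀ f : ℂ → X, AnalyticOnNhd ℂ f (ball z₀ r) →
    (∀ z ∈ ball z₀ r, T (f z) - z • f z = 0) → ∀ z ∈ ball z₀ r, f z = 0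

/-- The approximate point spectrum: points where `T - z` is not bounded below. -/
def aspectrum (T : X →L[ℂ] X) : Set ℂ :=
  {z | ¬ ∃ c > (0 : ℝ), ∀ x : X, c * ‖x‖ ≤ ‖(T - z • 1) x‖}

/-- The isolated points of a set `S ⊆ ℂ`. -/
def iso (S : Set ℂ) : Set ℂ := {z ∈ S | 𝓝[S \ {z}] z = ⊥}

/-- The set `Π(T)` of poles of the resolvent of `T`. -/
noncomputable def poles (T : X →L[ℂ] X) : Set ℂ :=
  {z ∈ spectrum ℂ T | ascent (T - z • 1) = descent (T - z • 1) ∧ ascent (T - z • 1) ≠ ⊤}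

/-- The set `Π^a(T)` of left poles of `T`. -/
noncomputable def leftPoles (T : X →L[ℂ] X) : Set ℂ :=
  {z ∈ aspectrum T | ∃ d : ℕ, ascent (T - z • 1) = (d : ℕ∞) ∧
    IsClosed ((LinearMap.range (((T - z • 1) ^ (d + 1) : X →L[ℂ] X) : X →ₗ[ℂ] X) : Submodule ℂ X) : Set X)}

/-- `E(T)`: eigenvalues of `T` which are isolated points of the spectrum. -/
def eigE (T : X →L[ℂ] X) : Set ℂ :=
  {z ∈ iso (spectrum ℂ T) | ∃ x : X, x ≠ 0 ∧ T x = z • x}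

/-- `E^a(T)`: eigenvalues of `T` which are isolated points of the approximate point spectrum. -/
def eigEa (T : X →L[ℂ] X) : Set ℂ :=
  {z ∈ iso (aspectrum T) | ∃ x : X, x ≠ 0 ∧ T x = z • x}

/-- Fredholm operator. -/
def IsFredholm (T : X →L[ℂ] X) : Prop :=
  FiniteDimensional ℂ (LinearMap.ker (T : X →ₗ[ℂ] X)) ∧
  IsClosed ((LinearMap.range (T : X →ₗ[ℂ] X) : Submodule ℂ X) : Set X) ∧
  FiniteDimensional ℂ (X ⧸ (LinearMap.range (T : X →ₗ[ℂ] X) : Submodule ℂ X))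

/-- The Fredholm index `α(T) - β(T)`. -/
noncomputable def fredIndex (T : X →L[ℂ] X) : ℤ :=
  (Module.finrank ℂ (LinearMap.ker (T : X →ₗ[ℂ] X)) : ℤ) -
    (Module.finrank ℂ (X ⧸ (LinearMap.range (T : X →ₗ[ℂ] X) : Submodule ℂ X)) : ℤ)

/-- The Weyl spectrum `σ_w(T)`. -/
noncomputable def weylSpec (T : X →L[ℂ] X) : Set ℂ :=
  {z ∈ spectrum ℂ T | ¬ (IsFredholm (T - z • 1) ∧ fredIndex (T - z • 1) = 0)}

/-- Upper semi-Fredholm operator. -/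
def IsUpperSemiFredholm (T : X →L[ℂ] X) : Prop :=
  FiniteDimensional ℂ (LinearMap.ker (T : X →ₗ[ℂ] X)) ∧
  IsClosed ((LinearMap.range (T : X →ₗ[ℂ] X) : Submodule ℂ X) : Set X)

/-- `ind T ≤ 0`, allowing an infinite-dimensional cokernel. -/
def indexLE0 (T : X →L[ℂ] X) : Prop :=
  (Module.finrank ℂ (LinearMap.ker (T : X →ₗ[ℂ] X)) : Cardinal) ≤
    Module.rank ℂ (X ⧸ (LinearMap.range (T : X →ₗ[ℂ] X) : Submodule ℂ X))

/-- The approximate (left) Weyl spectrum `σ_aw(T)`. -/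
noncomputable def aweylSpec (T : X →L[ℂ] X) : Set ℂ :=
  {z ∈ aspectrum T | ¬ (IsUpperSemiFredholm (T - z • 1) ∧ indexLE0 (T - z • 1))}

/-- The restriction of `T` to the invariant subspace `range (Tⁿ)`. -/
noncomputable def restr (T : X →L[ℂ] X) (n : ℕ) :
    (LinearMap.range ((T ^ n : X →L[ℂ] X) : X →ₗ[ℂ] X) : Submodule ℂ X) →ₗ[ℂ] (LinearMap.range ((T ^ n : X →L[ℂ] X) : X →ₗ[ℂ] X) : Submodule ℂ X) :=
  (T : X →ₗ[ℂ] X).restrict (fun x hx => by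
    obtain ⟨y, hy⟩ := hx
    refine LinearMap.mem_range.mpr ⟨T y, ?_⟩
    have h : (T ^ n) * T = T * (T ^ n) := ((Commute.refl T).pow_left n).eq
    calc (T ^ n) (T y) = ((T ^ n) * T) y := rfl
      _ = (T * T ^ n) y := by rw [h]
      _ = T ((T ^ n) y) := rfl
      _ = T x := by rw [← hy]; rfl)

/-- `T` is B-Weyl: for some `n`, `range (Tⁿ)` is closed and the restriction of `T` to it is
Fredholm of index `0`. -/
noncomputable def IsBWeyl (T : X →L[ℂ] X) : Prop :=
  ∃ n : ℕ, IsClosed ((LinearMap.range ((T ^ n : X →L[ℂ] X) : X →ₗ[ℂ] X) : Submodule ℂ X) : Set X) ∧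
    FiniteDimensional ℂ (LinearMap.ker (restr T n)) ∧
    IsClosed ((LinearMap.range (restr T n) :
        Submodule ℂ (LinearMap.range ((T ^ n : X →L[ℂ] X) : X →ₗ[ℂ] X) : Submodule ℂ X)) :
      Set (LinearMap.range ((T ^ n : X →L[ℂ] X) : X →ₗ[ℂ] X) : Submodule ℂ X)) ∧
    FiniteDimensional ℂ
      ((LinearMap.range ((T ^ n : X →L[ℂ] X) : X →ₗ[ℂ] X) : Submodule ℂ X) ⧸ LinearMap.range (restr T n)) ∧
    Module.finrank ℂ (LinearMap.ker (restr T n)) =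
      Module.finrank ℂ ((LinearMap.range ((T ^ n : X →L[ℂ] X) : X →ₗ[ℂ] X) : Submodule ℂ X) ⧸ LinearMap.range (restr T n))

/-- `T` is upper B-Weyl: for some `n`, `range (Tⁿ)` is closed and the restriction of `T` to it is
upper semi-Fredholm of index `≤ 0`. -/
noncomputable def IsUpperBWeyl (T : X →L[ℂ] X) : Prop :=
  ∃ n : ℕ, IsClosed ((LinearMap.range ((T ^ n : X →L[ℂ] X) : X →ₗ[ℂ] X) : Submodule ℂ X) : Set X) ∧
    FiniteDimensional ℂ (LinearMap.ker (restr T n)) ∧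
    IsClosed ((LinearMap.range (restr T n) :
        Submodule ℂ (LinearMap.range ((T ^ n : X →L[ℂ] X) : X →ₗ[ℂ] X) : Submodule ℂ X)) :
      Set (LinearMap.range ((T ^ n : X →L[ℂ] X) : X →ₗ[ℂ] X) : Submodule ℂ X)) ∧
    (Module.finrank ℂ (LinearMap.ker (restr T n)) : Cardinal) ≤
      Module.rank ℂ ((LinearMap.range ((T ^ n : X →L[ℂ] X) : X →ₗ[ℂ] X) : Submodule ℂ X) ⧸ LinearMap.range (restr T n))

/-- The B-Weyl spectrum `σ_Bw(T)`. -/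
noncomputable def bweylSpec (T : X →L[ℂ] X) : Set ℂ :=
  {z ∈ spectrum ℂ T | ¬ IsBWeyl (T - z • 1)}

/-- The upper B-Weyl spectrum `σ_uBw(T)`. -/
noncomputable def ubweylSpec (T : X →L[ℂ] X) : Set ℂ :=
  {z ∈ aspectrum T | ¬ IsUpperBWeyl (T - z • 1)}

/-- `Φ^iso_Bw(T) = iso σ_w(T) ∩ σ_Bw(T)ᶜ`. -/
noncomputable def phiIsoBw (T : X →L[ℂ] X) : Set ℂ := iso (weylSpec T) ∩ (bweylSpec T)ᶜ

/-- `Φ^iso_uBw(T) = iso σ_aw(T) ∩ σ_uBw(T)ᶜ`. -/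
noncomputable def phiIsoUBw (T : X →L[ℂ] X) : Set ℂ := iso (aweylSpec T) ∩ (ubweylSpec T)ᶜ

/-- `T` is polaroid: isolated spectral points are poles. -/
noncomputable def Polaroid (T : X →L[ℂ] X) : Prop := iso (spectrum ℂ T) ⊆ poles T

/-- `T` is left polaroid: isolated points of `σ_a(T)` are left poles. -/
noncomputable def LeftPolaroid (T : X →L[ℂ] X) : Prop := iso (aspectrum T) ⊆ leftPoles T

/-- `T` is a-polaroid: isolated points of `σ_a(T)` are poles. -/
noncomputable def APolaroid (T : X →L[ℂ] X) : Prop := iso (aspectrum T) ⊆ poles T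

/-- Property `(P1)`: `E(T) = Π^a(T)`. -/
noncomputable def P1 (T : X →L[ℂ] X) : Prop := eigE T = leftPoles T

/-- Property `(P2)`: `E^a(T) = Π(T)`. -/
noncomputable def P2 (T : X →L[ℂ] X) : Prop := eigEa T = poles T

/-- The resolvent of `T` has a pole (finite-order singularity) at `z₀`. -/
noncomputable def HasResolventPoleAt (T : X →L[ℂ] X) (z₀ : ℂ) : Prop :=
  z₀ ∈ iso (spectrum ℂ T) ∧ ∃ n : ℕ, 0 < n ∧
    (fun z => (z - z₀) ^ n • resolvent T z) =O[𝓝[≠] z₀] (fun _ => (1 : ℝ))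

/-- A holomorphic (Riesz) functional calculus for `T` on an open neighbourhood `U ⊇ σ(T)`:
an algebra homomorphism on functions holomorphic on `U`, sending `1 ↦ 1`, `id ↦ T`, and
satisfying the spectral mapping theorem for the spectrum and approximate point spectrum. -/
structure HoloCalcOn (T : X →L[ℂ] X) (U : Set ℂ) where
  isOpen : IsOpen U
  spec_subset : spectrum ℂ T ⊆ U
  toFun : (ℂ → ℂ) → (X →L[ℂ] X)
  map_one : toFun (fun _ => 1) = 1
  map_id : toFun id = T
  map_add : ∀ f g : ℂ → ℂ, AnalyticOnNhd ℂ f U → AnalyticOnNhd ℂ g U →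
    toFun (f + g) = toFun f + toFun g
  map_mul : ∀ f g : ℂ → ℂ, AnalyticOnNhd ℂ f U → AnalyticOnNhd ℂ g U →
    toFun (f * g) = toFun f * toFun g
  map_smul : ∀ (c : ℂ) (f : ℂ → ℂ), AnalyticOnNhd ℂ f U → toFun (c • f) = c • toFun f
  spec_map : ∀ f : ℂ → ℂ, AnalyticOnNhd ℂ f U → spectrum ℂ (toFun f) = f '' spectrum ℂ T
  aspec_map : ∀ f : ℂ → ℂ, AnalyticOnNhd ℂ f U → aspectrum (toFun f) = f '' aspectrum T

/-- `f` is non-constant on each connected component of `σ(T)`. -/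
def NonConstOnSpecComponents (T : X →L[ℂ] X) (f : ℂ → ℂ) : Prop :=
  ∀ z ∈ spectrum ℂ T, ∃ w ∈ connectedComponentIn (spectrum ℂ T) z, f w ≠ f z

section PowKerRange

variable {R M : Type*} [Ring R] [AddCommGroup M] [Module R M] {f g : Module.End R M} {n q : ℕ}

theorem ker_pow_le_ker_pow_succ (f : Module.End R M) (n : ℕ) :
    LinearMap.ker (f ^ n) ≤ LinearMap.ker (f ^ (n + 1)) := by
  rw [pow_succ', Module.End.mul_eq_comp]
  exact LinearMap.ker_le_ker_comp _ _

theorem range_pow_succ_le_range_pow (f : Module.End R M) (n : ℕ) :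
    LinearMap.range (f ^ (n + 1)) ≤ LinearMap.range (f ^ n) := by
  rw [pow_succ, Module.End.mul_eq_comp]
  exact LinearMap.range_comp_le_range _ _

theorem ker_pow_eq_of_mul_pow_succ_eq (h : g * f ^ (n + 1) = f ^ n) :
    LinearMap.ker (f ^ n) = LinearMap.ker (f ^ (n + 1)) :=
  le_antisymm (ker_pow_le_ker_pow_succ f n) fun x hx => by
    rw [LinearMap.mem_ker, ← h, Module.End.mul_apply, LinearMap.mem_ker.1 hx, map_zero]

theorem range_pow_eq_of_pow_succ_mul_eq (h : f ^ (n + 1) * g = f ^ n) :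
    LinearMap.range (f ^ n) = LinearMap.range (f ^ (n + 1)) :=
  le_antisymm (fun _ ⟨x, hx⟩ => ⟨g x, by rw [← hx, ← h, Module.End.mul_apply]⟩)
    (range_pow_succ_le_range_pow f n)

theorem range_pow_constant (h : LinearMap.range (f ^ q) = LinearMap.range (f ^ (q + 1))) :
    ∀ m, LinearMap.range (f ^ q) = LinearMap.range (f ^ (q + m))
  | 0 => rfl
  | m + 1 =>
    calc LinearMap.range (f ^ q) = (LinearMap.range (f ^ (q + 1))).map (f ^ m) := by
          rw [range_pow_constant h m, ← h, ← LinearMap.range_comp, ← Module.End.mul_eq_comp,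
            ← pow_add, add_comm]
      _ = LinearMap.range (f ^ (q + (m + 1))) := by
          rw [← LinearMap.range_comp, ← Module.End.mul_eq_comp, ← pow_add, add_left_comm]

end PowKerRange

section StableKerRange

variable {K V : Type*} [DivisionRing K] [AddCommGroup V] [Module K V] {f : Module.End K V}
  {p q : ℕ}

theorem ker_pow_succ_eq_of_range_pow_succ_eq
    (hk : LinearMap.ker (f ^ p) = LinearMap.ker (f ^ (p + 1)))
    (hr : LinearMap.range (f ^ q) = LinearMap.range (f ^ (q + 1))) :
    LinearMap.ker (f ^ q) = LinearMap.ker (f ^ (q + 1)) := by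
  refine le_antisymm (ker_pow_le_ker_pow_succ f q) fun x hx => ?_
  obtain ⟨u, hu⟩ : (f ^ q) x ∈ LinearMap.range (f ^ (q + p)) :=
    range_pow_constant hr p ▸ LinearMap.mem_range_self _ x
  have hu0 : u ∈ LinearMap.ker (f ^ (p + (q + 1))) := by
    rw [LinearMap.mem_ker, show p + (q + 1) = q + p + 1 by omega, pow_succ',
      Module.End.mul_apply, hu, ← Module.End.mul_apply, ← pow_succ']
    exact hx
  rw [← Module.End.ker_pow_constant hk, Module.End.ker_pow_constant hk q, LinearMap.mem_ker] at hu0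
  rw [LinearMap.mem_ker, ← hu, add_comm, hu0]

theorem range_pow_succ_eq_of_ker_pow_succ_eq
    (hk : LinearMap.ker (f ^ p) = LinearMap.ker (f ^ (p + 1)))
    (hr : LinearMap.range (f ^ q) = LinearMap.range (f ^ (q + 1))) :
    LinearMap.range (f ^ p) = LinearMap.range (f ^ (p + 1)) := by
  refine le_antisymm ?_ (range_pow_succ_le_range_pow f p)
  rintro _ ⟨x, rfl⟩
  obtain ⟨u, hu⟩ : (f ^ (q + p)) x ∈ LinearMap.range (f ^ (q + p + (p + 1))) := by
    rw [add_assoc, ← range_pow_constant hr, range_pow_constant hr p]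
    exact LinearMap.mem_range_self _ x
  have hx : x - (f ^ (p + 1)) u ∈ LinearMap.ker (f ^ p) := by
    rw [Module.End.ker_pow_constant hk q, add_comm p q, LinearMap.mem_ker, map_sub,
      ← Module.End.mul_apply, ← pow_add, hu, sub_self]
  rw [LinearMap.mem_ker, map_sub, sub_eq_zero] at hx
  exact ⟨(f ^ p) u, by
    rw [hx, ← Module.End.mul_apply, ← Module.End.mul_apply, ← pow_add, ← pow_add, add_comm]⟩

end StableKerRange

theorem sInf_natCast_image {S : Set ℕ} (h : S.Nonempty) :
    sInf (((↑) : ℕ → ℕ∞) '' S) = ((sInf S : ℕ) : ℕ∞) :=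
  le_antisymm (sInf_le ⟨_, Nat.sInf_mem h, rfl⟩) <| le_sInf <| by
    rintro _ ⟨m, hm, rfl⟩
    exact_mod_cast Nat.sInf_le hm

theorem sInf_natCast_image_eq_and_ne_top_iff {P Q : ℕ → Prop}
    (hPQ : ∀ p q, P p → Q q → P q) (hQP : ∀ p q, P p → Q q → Q p) :
    (sInf (((↑) : ℕ → ℕ∞) '' {n | P n}) = sInf ((↑) '' {n | Q n}) ∧
      sInf (((↑) : ℕ → ℕ∞) '' {n | P n}) ≠ ⊤) ↔ ∃ p, P p ∧ Q p := by
  constructor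
  · rintro ⟨heq, hne⟩
    have hP : {n | P n}.Nonempty := by
      by_contra h
      exact hne (by rw [not_nonempty_iff_eq_empty.mp h, image_empty, sInf_empty])
    have hQ : {n | Q n}.Nonempty := by
      by_contra h
      exact hne (by rw [heq, not_nonempty_iff_eq_empty.mp h, image_empty, sInf_empty])
    exact ⟨_, Nat.sInf_mem hP, hQP _ _ (Nat.sInf_mem hP) (Nat.sInf_mem hQ)⟩
  · rintro ⟨p, hPp, hQp⟩
    have hP : {n | P n}.Nonempty := ⟨p, hPp⟩
    have hQ : {n | Q n}.Nonempty := ⟨p, hQp⟩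
    rw [sInf_natCast_image hP, sInf_natCast_image hQ]
    refine ⟨?_, ENat.natCast_ne_top _⟩
    exact_mod_cast le_antisymm (Nat.sInf_le (hPQ _ _ (Nat.sInf_mem hP) (Nat.sInf_mem hQ)))
      (Nat.sInf_le (hQP _ _ (Nat.sInf_mem hP) (Nat.sInf_mem hQ)))

theorem ascent_eq_descent_and_ne_top_iff {E : Type*} [NormedAddCommGroup E] [NormedSpace ℂ E]
    (T : E →L[ℂ] E) :
    (ascent T = descent T ∧ ascent T ≠ ⊤) ↔
      ∃ p, LinearMap.ker ((T : E →ₗ[ℂ] E) ^ p) = LinearMap.ker ((T : E →ₗ[ℂ] E) ^ (p + 1)) ∧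
        LinearMap.range ((T : E →ₗ[ℂ] E) ^ p) = LinearMap.range ((T : E →ₗ[ℂ] E) ^ (p + 1)) := by
  simp only [ascent, descent, ContinuousLinearMap.toLinearMap_pow]
  exact sInf_natCast_image_eq_and_ne_top_iff (fun _ _ => ker_pow_succ_eq_of_range_pow_succ_eq)
    (fun _ _ => range_pow_succ_eq_of_ker_pow_succ_eq)

theorem mem_iso_iff {S : Set ℂ} {z : ℂ} : z ∈ iso S ↔ z ∈ S ∧ ∀ᶠ w in 𝓝[≠] z, w ∉ S := by
  rw [iso, mem_ofPred_eq, sdiff_eq, inter_comm, nhdsWithin_inter', inf_principal_eq_bot]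
  rfl

section RemovableSingularity

variable {E : Type*} [NormedAddCommGroup E] [NormedSpace ℂ E] [CompleteSpace E]

theorem exists_iterate_eq_of_sub_smul_eq {S : E →L[ℂ] E} {G : ℂ → E} {s : Set ℂ} {z : ℂ} {y : E}
    (hs : s ∈ 𝓝 z) (hG : DifferentiableOn ℂ G s)
    (hGy : ∀ᶠ w in 𝓝[≠] z, (w - z) • G w - S (G w) = y) (k : ℕ) : ∃ c, S^[k] c = y := by
  induction k generalizing G y with
  | zero => exact ⟨y, rfl⟩
  | succ k ih =>
    have hGz : ContinuousAt G z := (hG.differentiableAt hs).continuousAt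
    have hy : S (-G z) = y := by
      have hlim : Tendsto (fun w => (w - z) • G w - S (G w)) (𝓝[≠] z)
          (𝓝 ((z - z) • G z - S (G z))) :=
        (((continuousAt_id.sub continuousAt_const).smul hGz).sub
          (S.continuous.continuousAt.comp hGz)).tendsto.mono_left nhdsWithin_le_nhds
      rw [sub_self, zero_smul, zero_sub, ← map_neg] at hlim
      exact tendsto_nhds_unique hlim (tendsto_const_nhds.congr' (hGy.mono fun _ h => h.symm))
    have hdslope : ∀ᶠ w in 𝓝[≠] z, (w - z) • dslope G z w - S (dslope G z w) = -G z := by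
      filter_upwards [hGy, self_mem_nhdsWithin] with w hw hwz
      have hwz₀ : w - z ≠ 0 := sub_ne_zero.2 hwz
      have hSw : S (G w) = (w - z) • G w - y := by rw [← hw, sub_sub_cancel]
      have hSz : S (G z) = -y := by rw [← hy, map_neg, neg_neg]
      rw [dslope_of_ne _ hwz, slope_def_module, map_smul, map_sub, hSw, hSz, smul_smul,
        mul_inv_cancel₀ hwz₀, one_smul, sub_neg_eq_add, sub_add_cancel, smul_smul,
        inv_mul_cancel₀ hwz₀, one_smul]
      abel
    obtain ⟨c, hc⟩ := ih ((Complex.differentiableOn_dslope hs).2 hG) hdslope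
    exact ⟨c, by rw [Function.iterate_succ_apply', hc, hy]⟩

theorem exists_iterate_eq_of_isBigO_one {S : E →L[ℂ] E} {G : ℂ → E} {z : ℂ} {y : E}
    (hG : ∀ᶠ w in 𝓝[≠] z, DifferentiableAt ℂ G w ∧ (w - z) • G w - S (G w) = y)
    (hbdd : G =O[𝓝[≠] z] (fun _ => (1 : ℝ))) (k : ℕ) : ∃ c, S^[k] c = y := by
  have hs : {w | w ≠ z → DifferentiableAt ℂ G w} ∈ 𝓝 z :=
    eventually_nhdsWithin_iff.1 (hG.mono fun _ h => h.1)
  have hF := Complex.differentiableOn_update_limUnder_of_isLittleO hs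
    (fun w hw => (hw.1 hw.2).differentiableWithinAt)
    ((isBigO_one_iff ℝ).1 (hbdd.sub (isBigO_const_one ℝ (G z) _))).isLittleO_sub_self_inv
  refine exists_iterate_eq_of_sub_smul_eq hs hF ?_ k
  filter_upwards [hG, self_mem_nhdsWithin] with w hw hwz
  rw [Function.update_of_ne hwz]
  exact hw.2

end RemovableSingularity

/-- `(xⁿ - yⁿ) / (x - y)` when `x` and `y` commute. -/
def geomSum₂ {R : Type*} [Semiring R] (x y : R) (n : ℕ) : R :=
  ∑ i ∈ Finset.range n, x ^ i * y ^ (n - 1 - i)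

section BanachAlgebra

variable {𝒜 : Type*} [NormedRing 𝒜] [NormedAlgebra ℂ 𝒜]

theorem algebraMap_sub_mul_geomSum₂ (b : 𝒜) (n : ℕ) (w : ℂ) :
    (algebraMap ℂ 𝒜 w - b) * geomSum₂ (algebraMap ℂ 𝒜 w) b n = algebraMap ℂ 𝒜 (w ^ n) - b ^ n := by
  rw [map_pow]; exact (Algebra.commute_algebraMap_left w b).mul_geom_sum₂ n

theorem geomSum₂_mul_algebraMap_sub (b : 𝒜) (n : ℕ) (w : ℂ) :
    geomSum₂ (algebraMap ℂ 𝒜 w) b n * (algebraMap ℂ 𝒜 w - b) = algebraMap ℂ 𝒜 (w ^ n) - b ^ n := by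
  rw [map_pow]; exact (Algebra.commute_algebraMap_left w b).geom_sum₂_mul n

theorem differentiable_geomSum₂_algebraMap (b : 𝒜) (n : ℕ) :
    Differentiable ℂ fun w => geomSum₂ (algebraMap ℂ 𝒜 w) b n := by
  simp only [geomSum₂, Algebra.algebraMap_eq_smul_one]
  fun_prop

variable [CompleteSpace 𝒜]

theorem exists_mul_pow_succ_eq_of_resolvent_isBigO {a : 𝒜} {z : ℂ} {n : ℕ}
    (hres : ∀ᶠ μ in 𝓝[≠] z, μ ∈ resolventSet ℂ a)
    (hO : (fun μ => (μ - z) ^ n • resolvent a μ) =O[𝓝[≠] z] fun _ => (1 : ℝ)) :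
    (∃ c, (a - algebraMap ℂ 𝒜 z) ^ (n + 1) * c = (a - algebraMap ℂ 𝒜 z) ^ n) ∧
      ∃ c, c * (a - algebraMap ℂ 𝒜 z) ^ (n + 1) = (a - algebraMap ℂ 𝒜 z) ^ n := by
  set b := a - algebraMap ℂ 𝒜 z
  set G : ℂ → 𝒜 := fun μ => (μ - z) ^ n • resolvent a μ - geomSum₂ (algebraMap ℂ 𝒜 (μ - z)) b n
  have hP : Continuous fun μ => geomSum₂ (algebraMap ℂ 𝒜 (μ - z)) b n :=
    (differentiable_geomSum₂_algebraMap b n).continuous.comp (continuous_sub_right z)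
  have hG : ∀ μ ∈ resolventSet ℂ a, DifferentiableAt ℂ G μ ∧
      (algebraMap ℂ 𝒜 (μ - z) - b) * G μ = b ^ n ∧ G μ * (algebraMap ℂ 𝒜 (μ - z) - b) = b ^ n := by
    intro μ hμ
    have hsub : algebraMap ℂ 𝒜 (μ - z) - b = algebraMap ℂ 𝒜 μ - a := by
      simp only [b, map_sub]; abel
    have hR₁ : (algebraMap ℂ 𝒜 μ - a) * resolvent a μ = 1 := Ring.mul_inverse_cancel _ hμ
    have hR₂ : resolvent a μ * (algebraMap ℂ 𝒜 μ - a) = 1 := Ring.inverse_mul_cancel _ hμ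
    refine ⟨(((differentiableAt_id.sub_const z).pow n).smul
      (spectrum.hasDerivAt_resolvent_const_left hμ).differentiableAt).sub
      ((differentiable_geomSum₂_algebraMap b n).comp (differentiable_id.sub_const z) μ), ?_, ?_⟩
    · rw [mul_sub, algebraMap_sub_mul_geomSum₂, mul_smul_comm, hsub, hR₁,
        ← Algebra.algebraMap_eq_smul_one, sub_sub_cancel]
    · rw [sub_mul, geomSum₂_mul_algebraMap_sub, smul_mul_assoc, hsub, hR₂,
        ← Algebra.algebraMap_eq_smul_one, sub_sub_cancel]
  have hbdd : G =O[𝓝[≠] z] fun _ => (1 : ℝ) :=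
    hO.sub (((hP.tendsto z).mono_left nhdsWithin_le_nhds).isBigO_one ℝ)
  constructor
  · obtain ⟨c, hc⟩ := exists_iterate_eq_of_isBigO_one (S := ContinuousLinearMap.mul ℂ 𝒜 b)
      (y := b ^ n) (hres.mono fun μ hμ => ⟨(hG μ hμ).1, by
        rw [ContinuousLinearMap.mul_apply', Algebra.smul_def, ← sub_mul]
        exact (hG μ hμ).2.1⟩) hbdd (n + 1)
    exact ⟨c, by rwa [show ⇑(ContinuousLinearMap.mul ℂ 𝒜 b) = (b * ·) from rfl,
      mul_left_iterate] at hc⟩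
  · obtain ⟨c, hc⟩ := exists_iterate_eq_of_isBigO_one (S := (ContinuousLinearMap.mul ℂ 𝒜).flip b)
      (y := b ^ n) (hres.mono fun μ hμ => ⟨(hG μ hμ).1, by
        rw [ContinuousLinearMap.flip_apply, ContinuousLinearMap.mul_apply', Algebra.smul_def,
          Algebra.commutes, ← mul_sub]
        exact (hG μ hμ).2.2⟩) hbdd (n + 1)
    exact ⟨c, by rwa [show ⇑((ContinuousLinearMap.mul ℂ 𝒜).flip b) = (· * b) from rfl,
      mul_right_iterate] at hc⟩

end BanachAlgebra

theorem mem_resolventSet_and_smul_resolvent_eq {𝕜 A : Type*} [Field 𝕜] [Ring A] [Algebra 𝕜 A]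
    {a b : A} {w c : 𝕜} (hc : c ≠ 0) (h₁ : (algebraMap 𝕜 A w - a) * b = algebraMap 𝕜 A c)
    (h₂ : b * (algebraMap 𝕜 A w - a) = algebraMap 𝕜 A c) :
    w ∈ resolventSet 𝕜 a ∧ c • resolvent a w = b := by
  let u : Aˣ :=
    ⟨algebraMap 𝕜 A w - a, c⁻¹ • b,
      by rw [mul_smul_comm, h₁, Algebra.algebraMap_eq_smul_one, inv_smul_smul₀ hc],
      by rw [smul_mul_assoc, h₂, Algebra.algebraMap_eq_smul_one, inv_smul_smul₀ hc]⟩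
  refine ⟨⟨u, rfl⟩, ?_⟩
  rw [resolvent, ← show (u : A) = algebraMap 𝕜 A w - a from rfl, Ring.inverse_unit]
  exact smul_inv_smul₀ hc b

section Intertwining

variable {E F : Type*} [NormedAddCommGroup E] [NormedSpace ℂ E] [NormedAddCommGroup F]
  [NormedSpace ℂ F]

theorem algebraMap_sub_mul_comp_resolvent_comp {T : E →L[ℂ] E} {U : F →L[ℂ] F} {π : E →L[ℂ] F}
    {J : F →L[ℂ] E} (hπ : π ∘L T = U ∘L π) (hJ : T ∘L J = J ∘L U) {w : ℂ}
    (hw : w ∈ resolventSet ℂ U) :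
    (algebraMap ℂ _ w - T) * (J ∘L resolvent U w ∘L π) = J ∘L π ∧
      (J ∘L resolvent U w ∘L π) * (algebraMap ℂ _ w - T) = J ∘L π := by
  have hJw : (algebraMap ℂ _ w - T) ∘L J = J ∘L (algebraMap ℂ _ w - U) := by
    ext x
    have := DFunLike.congr_fun hJ x
    simp_all [Algebra.algebraMap_eq_smul_one]
  have hπw : π ∘L (algebraMap ℂ _ w - T) = (algebraMap ℂ _ w - U) ∘L π := by
    ext x
    have := DFunLike.congr_fun hπ x
    simp_all [Algebra.algebraMap_eq_smul_one]
  have hR₁ : (algebraMap ℂ _ w - U) * resolvent U w = 1 := Ring.mul_inverse_cancel _ hw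
  have hR₂ : resolvent U w * (algebraMap ℂ _ w - U) = 1 := Ring.inverse_mul_cancel _ hw
  constructor
  · rw [ContinuousLinearMap.mul_def, ← ContinuousLinearMap.comp_assoc, hJw,
      ContinuousLinearMap.comp_assoc, ← ContinuousLinearMap.comp_assoc _ _ π,
      ← ContinuousLinearMap.mul_def, hR₁]
    rfl
  · rw [ContinuousLinearMap.mul_def, ContinuousLinearMap.comp_assoc,
      ContinuousLinearMap.comp_assoc, hπw, ← ContinuousLinearMap.comp_assoc _ _ π,
      ← ContinuousLinearMap.mul_def, hR₂]
    rfl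

theorem exists_continuousAt_eq_pow_smul_resolvent_of_intertwining [CompleteSpace F]
    {A : E →L[ℂ] E} {z : ℂ} {U : F →L[ℂ] F} {π : E →L[ℂ] F} {J : F →L[ℂ] E} {p : ℕ} (hU : IsUnit U) (hπ : π ∘L (A - algebraMap ℂ _ z) = U ∘L π)
    (hJ : (A - algebraMap ℂ _ z) ∘L J = J ∘L U) (hJπ : J ∘L π = (A - algebraMap ℂ _ z) ^ p) :
    ∃ B : ℂ → E →L[ℂ] E, ContinuousAt B z ∧
      ∀ᶠ μ in 𝓝[≠] z, μ ∈ resolventSet ℂ A ∧ (μ - z) ^ p • resolvent A μ = B μ := by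
  set T := A - algebraMap ℂ (E →L[ℂ] E) z
  have h0 : (0 : ℂ) ∈ resolventSet ℂ U := by
    rw [spectrum.mem_resolventSet_iff, map_zero, zero_sub]
    exact hU.neg
  have hR : ContinuousAt (fun μ => resolvent U (μ - z)) z :=
    (spectrum.hasDerivAt_resolvent_const_left h0).continuousAt.comp_of_eq
      (continuous_sub_right z).continuousAt (sub_self z)
  refine ⟨fun μ => geomSum₂ (algebraMap ℂ _ (μ - z)) T p + J ∘L resolvent U (μ - z) ∘L π, ?_, ?_⟩
  · exact ((differentiable_geomSum₂_algebraMap T p).continuous.comp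
      (continuous_sub_right z)).continuousAt.add
      (continuousAt_const.clm_comp (hR.clm_comp continuousAt_const))
  · have hU : ∀ᶠ μ in 𝓝 z, μ - z ∈ resolventSet ℂ U :=
      ((continuous_sub_right z).tendsto' z 0 (sub_self z)).eventually
        ((spectrum.isOpen_resolventSet U).mem_nhds h0)
    filter_upwards [nhdsWithin_le_nhds hU, self_mem_nhdsWithin] with μ hμ hμz
    have hsub : algebraMap ℂ (E →L[ℂ] E) (μ - z) - T = algebraMap ℂ _ μ - A := by
      simp only [T, map_sub]; abel
    obtain ⟨h₁, h₂⟩ := algebraMap_sub_mul_comp_resolvent_comp hπ hJ hμ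
    rw [hsub, hJπ] at h₁ h₂
    refine mem_resolventSet_and_smul_resolvent_eq (pow_ne_zero p (sub_ne_zero.2 hμz)) ?_ ?_
    · rw [mul_add, ← hsub, algebraMap_sub_mul_geomSum₂, hsub, h₁, sub_add_cancel]
    · rw [add_mul, ← hsub, geomSum₂_mul_algebraMap_sub, hsub, h₂, sub_add_cancel]

end Intertwining

section QuotientKerPow

variable {E : Type*} [NormedAddCommGroup E] [NormedSpace ℂ E] (T : E →L[ℂ] E) (p : ℕ)

abbrev kerPow : Submodule ℂ E := LinearMap.ker ((T : E →ₗ[ℂ] E) ^ p)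

theorem kerPow_le_comap : kerPow T p ≤ (kerPow T p).comap (T : E →ₗ[ℂ] E) := fun x hx => by
  rw [Submodule.mem_comap, LinearMap.mem_ker, ← Module.End.mul_apply, ← pow_succ,
    pow_succ', Module.End.mul_apply, LinearMap.mem_ker.1 hx, map_zero]

noncomputable def quotientKerPowMap : (E ⧸ kerPow T p) →L[ℂ] (E ⧸ kerPow T p) :=
  (kerPow T p).liftQL ((kerPow T p).mkQL ∘L T) fun _ hx =>
    (Submodule.Quotient.mk_eq_zero _).2 (kerPow_le_comap T p hx)

noncomputable def quotientKerPowLift : (E ⧸ kerPow T p) →L[ℂ] E :=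
  (kerPow T p).liftQL (T ^ p) fun _ hx => by rwa [ContinuousLinearMap.toLinearMap_pow]

theorem quotientKerPowMap_comp_mkQL :
    quotientKerPowMap T p ∘L (kerPow T p).mkQL = (kerPow T p).mkQL ∘L T := rfl

theorem quotientKerPowLift_comp_mkQL : quotientKerPowLift T p ∘L (kerPow T p).mkQL = T ^ p := rfl

theorem comp_quotientKerPowLift :
    T ∘L quotientKerPowLift T p = quotientKerPowLift T p ∘L quotientKerPowMap T p := by
  ext q
  obtain ⟨x, rfl⟩ := Submodule.mkQ_surjective _ q
  change T ((T ^ p) x) = (T ^ p) (T x)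
  exact DFunLike.congr_fun (Commute.self_pow T p).eq x

variable {T p}

theorem bijective_quotientKerPowMap
    (hk : LinearMap.ker ((T : E →ₗ[ℂ] E) ^ p) = LinearMap.ker ((T : E →ₗ[ℂ] E) ^ (p + 1)))
    (hr : LinearMap.range ((T : E →ₗ[ℂ] E) ^ p) = LinearMap.range ((T : E →ₗ[ℂ] E) ^ (p + 1))) :
    Function.Bijective (quotientKerPowMap T p) := by
  constructor
  · refine (injective_iff_map_eq_zero _).2 fun q hq => ?_
    obtain ⟨x, rfl⟩ := Submodule.mkQ_surjective _ q
    have hTx : T x ∈ kerPow T p := (Submodule.Quotient.mk_eq_zero _).1 hq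
    refine (Submodule.Quotient.mk_eq_zero _).2 ?_
    rw [kerPow, hk, LinearMap.mem_ker, pow_succ, Module.End.mul_apply]
    exact hTx
  · intro q
    obtain ⟨x, rfl⟩ := Submodule.mkQ_surjective _ q
    obtain ⟨u, hu⟩ : ((T : E →ₗ[ℂ] E) ^ p) x ∈ LinearMap.range ((T : E →ₗ[ℂ] E) ^ (p + 1)) :=
      hr ▸ LinearMap.mem_range_self _ x
    refine ⟨Submodule.Quotient.mk u, (Submodule.Quotient.eq _).2 ?_⟩
    rw [LinearMap.mem_ker, map_sub, sub_eq_zero, ← hu, pow_succ, Module.End.mul_apply]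

end QuotientKerPow

theorem exists_continuousAt_eq_pow_smul_resolvent {E : Type*} [NormedAddCommGroup E]
    [NormedSpace ℂ E] [CompleteSpace E] {A : E →L[ℂ] E} {z : ℂ} {p : ℕ}
    (hk : LinearMap.ker (((A - algebraMap ℂ _ z : E →L[ℂ] E) : E →ₗ[ℂ] E) ^ p) =
      LinearMap.ker (((A - algebraMap ℂ _ z : E →L[ℂ] E) : E →ₗ[ℂ] E) ^ (p + 1)))
    (hr : LinearMap.range (((A - algebraMap ℂ _ z : E →L[ℂ] E) : E →ₗ[ℂ] E) ^ p) =
      LinearMap.range (((A - algebraMap ℂ _ z : E →L[ℂ] E) : E →ₗ[ℂ] E) ^ (p + 1))) :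
    ∃ B : ℂ → E →L[ℂ] E, ContinuousAt B z ∧
      ∀ᶠ μ in 𝓝[≠] z, μ ∈ resolventSet ℂ A ∧ (μ - z) ^ p • resolvent A μ = B μ := by
  have : IsClosed (kerPow (A - algebraMap ℂ _ z) p : Set E) := by
    rw [kerPow, ← ContinuousLinearMap.toLinearMap_pow]; exact ContinuousLinearMap.isClosed_ker _
  exact exists_continuousAt_eq_pow_smul_resolvent_of_intertwining
    (ContinuousLinearMap.isUnit_iff_bijective.2 (bijective_quotientKerPowMap hk hr))
    (quotientKerPowMap_comp_mkQL _ p).symm (comp_quotientKerPowLift _ p)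
    (quotientKerPowLift_comp_mkQL _ p)

/-- `λ ∈ σ(A)` is a pole of the resolvent iff `asc(A-λ) = dsc(A-λ) < ∞`. -/
theorem hasResolventPoleAt_iff (A : X →L[ℂ] X) (z : ℂ) (hz : z ∈ spectrum ℂ A) :
    HasResolventPoleAt A z ↔
      (ascent (A - z • 1) = descent (A - z • 1) ∧ ascent (A - z • 1) ≠ ⊤) := by
  rw [ascent_eq_descent_and_ne_top_iff, ← Algebra.algebraMap_eq_smul_one]
  constructor
  · rintro ⟨hiso, n, -, hO⟩
    obtain ⟨⟨c, hc⟩, ⟨d, hd⟩⟩ :=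
      exists_mul_pow_succ_eq_of_resolvent_isBigO ((mem_iso_iff.1 hiso).2.mono fun _ => not_not.1) hO
    refine ⟨n, ker_pow_eq_of_mul_pow_succ_eq (g := (d : X →ₗ[ℂ] X)) ?_,
      range_pow_eq_of_pow_succ_mul_eq (g := (c : X →ₗ[ℂ] X)) ?_⟩
    · rw [← ContinuousLinearMap.toLinearMap_pow, ← ContinuousLinearMap.toLinearMap_pow,
        ← ContinuousLinearMap.toLinearMap_mul, hd]
    · rw [← ContinuousLinearMap.toLinearMap_pow, ← ContinuousLinearMap.toLinearMap_pow,
        ← ContinuousLinearMap.toLinearMap_mul, hc]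
  · rintro ⟨p, hk, hr⟩
    obtain ⟨B, hB, hev⟩ := exists_continuousAt_eq_pow_smul_resolvent hk hr
    -- order `p + 1`, so that the case `p = 0` needs no separate treatment
    refine ⟨mem_iso_iff.2 ⟨hz, hev.mono fun _ h => not_not.2 h.1⟩, p + 1, p.succ_pos, ?_⟩
    have hlim : ContinuousAt (fun μ => (μ - z) • B μ) z :=
      (continuous_sub_right z).continuousAt.smul hB
    refine ((hlim.tendsto.mono_left nhdsWithin_le_nhds).isBigO_one ℝ).congr'
      (hev.mono fun μ h => ?_) EventuallyEq.rfl
    show _ = (μ - z) ^ (p + 1) • resolvent A μ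
    rw [pow_succ', mul_smul, h.2]

end Paper
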